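/- For every simple root α ∈ Δ: 2 − Σ_{β ∈ S⁺(α,0), ⟨β,α∨⟩ < 0} ⟨β, α∨⟩ = Σ_{β ∈ R, ⟨β,ϖ_α∨⟩ > 0} ⟨β, α∨⟩. -/

import Mathlib

open scoped RealInnerProductSpace

attribute [local instance] Classical.propDecidable

noncomputable section

/-- The coroot `α∨ = (2/⟨α,α⟩) • α` of a vector `α` in a real inner product space
(using the inner product to identify `V` with `V*`). -/
def coroot {V : Type*} [NormedAddCommGroup V] [InnerProductSpace ℝ V] (α : V) : V :=
  (2 / ⟪α, α⟫) • α

/-- A finite, reduced, irreducible, crystallographic root system in the real inner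
product space `V`.  (The Weyl group automatically acts by isometries, since the
reflections are defined via the inner product.) -/
structure IsRootSystem {V : Type*} [NormedAddCommGroup V] [InnerProductSpace ℝ V]
    (R : Finset V) : Prop where
  nonempty : R.Nonempty
  zero_not_mem : (0 : V) ∉ R
  span_eq_top : Submodule.span ℝ (R : Set V) = ⊤
  reduced : ∀ α ∈ R, ∀ t : ℝ, t • α ∈ R → t = 1 ∨ t = -1
  reflect_mem : ∀ α ∈ R, ∀ β ∈ R, β - ⟪β, coroot α⟫ • α ∈ R
  crystallographic : ∀ α ∈ R, ∀ β ∈ R, ∃ n : ℤ, ⟪β, coroot α⟫ = (n : ℝ)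
  irreducible : ∀ S : Set V, (∀ α ∈ R, ∀ β ∈ R, α ∈ S → ⟪α, β⟫ ≠ 0 → β ∈ S) →
    (∃ α ∈ R, α ∈ S) → ∀ β ∈ R, β ∈ S

/-- `Δ` is a base of simple roots for the root system `R`: it is a linearly
independent subset of `R` and every root is a nonnegative or nonpositive integral
combination of elements of `Δ`. -/
structure IsBase {V : Type*} [NormedAddCommGroup V] [InnerProductSpace ℝ V]
    (R Δ : Finset V) : Prop where
  subset : Δ ⊆ R
  indep : LinearIndependent ℝ (fun β : Δ => (β : V))
  expand : ∀ β ∈ R, (∃ c : V → ℕ, β = ∑ δ ∈ Δ, (c δ : ℝ) • δ) ∨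
    (∃ c : V → ℕ, β = -(∑ δ ∈ Δ, (c δ : ℝ) • δ))

/-!
The reflection `s_α` in a simple root permutes the positive roots other than `α`, so the
values `⟨β, α∨⟩` over `R⁺ \ {α}` cancel in pairs and `Σ_{β ∈ R⁺} ⟨β, α∨⟩ = ⟨α, α∨⟩ = 2`.
Pairing with `ϖ_α∨` reads off the `α`-coefficient, so the roots with `⟨β, ϖ_α∨⟩ > 0` are
positive and `R⁺` splits into them and `S⁺(α,0)`. On `S⁺(α,0)` the pairing `⟨β, α∨⟩` is
`≤ 0`, since `s_α β = β - ⟨β, α∨⟩ α` is again positive; hence the sum over `S⁺(α,0)` of the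
negative pairings is the whole sum over `S⁺(α,0)`, which is `2` minus the right-hand side.
-/

open Finset

section RootSystem

variable {V : Type*} [NormedAddCommGroup V] [InnerProductSpace ℝ V]

lemma inner_coroot_self {α : V} (hα : α ≠ 0) : ⟪α, coroot α⟫ = 2 := by
  rw [coroot, real_inner_smul_right]
  have : ⟪α, α⟫ ≠ 0 := inner_self_ne_zero.mpr hα
  field_simp

def rootReflection (α β : V) : V :=
  β - ⟪β, coroot α⟫ • α

lemma inner_rootReflection_coroot {α : V} (hα : α ≠ 0) (β : V) :
    ⟪rootReflection α β, coroot α⟫ = -⟪β, coroot α⟫ := by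
  rw [rootReflection, inner_sub_left, real_inner_smul_left, inner_coroot_self hα]
  ring

lemma rootReflection_rootReflection {α : V} (hα : α ≠ 0) (β : V) :
    rootReflection α (rootReflection α β) = β := by
  rw [rootReflection, inner_rootReflection_coroot hα, rootReflection, neg_smul, sub_neg_eq_add]
  abel

lemma rootReflection_self {α : V} (hα : α ≠ 0) : rootReflection α α = -α := by
  rw [rootReflection, inner_coroot_self hα, two_smul]
  abel

lemma IsBase.coeff_eq_of_sum_eq {R Δ : Finset V} (hΔ : IsBase R Δ) {a b : V → ℝ}
    (h : ∑ δ ∈ Δ, a δ • δ = ∑ δ ∈ Δ, b δ • δ) {δ : V} (hδ : δ ∈ Δ) : a δ = b δ := by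
  have hsum : ∑ δ ∈ Δ.attach, (a δ - b δ) • (δ : V) = 0 := by
    rw [sum_attach Δ fun δ => (a δ - b δ) • δ]
    simp only [sub_smul, sum_sub_distrib, h, sub_self]
  exact sub_eq_zero.mp <|
    linearIndependent_iff'.mp hΔ.indep _ (fun δ => a δ - b δ) hsum ⟨δ, hδ⟩ (mem_attach _ _)

lemma IsBase.natCast_smul_eq_zero_of_sum_eq {R Δ : Finset V} (hΔ : IsBase R Δ) {c d : V → ℕ}
    {b : V → ℝ} (h : ∑ δ ∈ Δ, ((c δ : ℝ) + d δ) • δ = ∑ δ ∈ Δ, b δ • δ) {δ : V} (hδ : δ ∈ Δ)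
    (hb : b δ = 0) : (c δ : ℝ) • δ = 0 := by
  have hcd := hΔ.coeff_eq_of_sum_eq h hδ
  have : (c δ : ℝ) = 0 := by linarith [(c δ).cast_nonneg (α := ℝ), (d δ).cast_nonneg (α := ℝ)]
  rw [this, zero_smul]

def IsPositiveRoot (R Δ : Finset V) (β : V) : Prop :=
  β ∈ R ∧ ∃ c : V → ℕ, β = ∑ δ ∈ Δ, (c δ : ℝ) • δ

def positiveRoots (R Δ : Finset V) : Finset V :=
  R.filter (IsPositiveRoot R Δ)

variable {R Δ : Finset V}

lemma mem_positiveRoots {β : V} : β ∈ positiveRoots R Δ ↔ IsPositiveRoot R Δ β := by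
  rw [positiveRoots, mem_filter, and_iff_right_iff_imp]
  exact And.left

lemma isPositiveRoot_of_mem_base (hΔ : IsBase R Δ) {α : V} (hα : α ∈ Δ) :
    IsPositiveRoot R Δ α := by
  refine ⟨hΔ.subset hα, fun δ => if δ = α then 1 else 0, ?_⟩
  simp [ite_smul, hα]

lemma IsPositiveRoot.not_neg (hR : IsRootSystem R) (hΔ : IsBase R Δ) {β : V}
    (hβ : IsPositiveRoot R Δ β) : ¬ IsPositiveRoot R Δ (-β) := by
  rintro ⟨-, d, hd⟩
  obtain ⟨hβR, c, rfl⟩ := hβ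
  have hsum : ∑ δ ∈ Δ, ((c δ : ℝ) + d δ) • δ = ∑ δ ∈ Δ, (0 : ℝ) • δ := by
    simp only [add_smul, sum_add_distrib, ← hd, zero_smul, sum_const_zero, add_neg_cancel]
  rw [sum_eq_zero fun δ hδ => hΔ.natCast_smul_eq_zero_of_sum_eq hsum hδ rfl] at hβR
  exact hR.zero_not_mem hβR

lemma IsPositiveRoot.rootReflection_of_ne (hR : IsRootSystem R) (hΔ : IsBase R Δ) {α β : V}
    (hα : α ∈ Δ) (hβ : IsPositiveRoot R Δ β) (hne : β ≠ α) :
    IsPositiveRoot R Δ (rootReflection α β) := by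
  have hαR := hΔ.subset hα
  obtain ⟨hβR, c, hc⟩ := hβ
  have hsR : rootReflection α β ∈ R := hR.reflect_mem α hαR β hβR
  refine ⟨hsR, (hΔ.expand _ hsR).resolve_right ?_⟩
  rintro ⟨d, hd⟩
  set k := ⟪β, coroot α⟫
  -- `β - k α = -(Σ d δ • δ)` forces every coefficient of `β` other than the `α`-one to vanish
  have hsum : ∑ δ ∈ Δ, ((c δ : ℝ) + d δ) • δ = ∑ δ ∈ Δ, (if δ = α then k else 0) • δ := by
    rw [rootReflection] at hd
    simp only [add_smul, sum_add_distrib, ite_smul, zero_smul, sum_ite_eq', if_pos hα, ← hc]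
    linear_combination (norm := module) hd
  have hβα : β = (c α : ℝ) • α := by
    rw [hc, sum_eq_single_of_mem α hα fun δ hδ hδα =>
      hΔ.natCast_smul_eq_zero_of_sum_eq hsum hδ (if_neg hδα)]
  rcases hR.reduced α hαR (c α) (hβα ▸ hβR) with h | h
  · exact hne (by rw [hβα, h, one_smul])
  · linarith [(c α).cast_nonneg (α := ℝ)]

theorem sum_positiveRoots_inner_coroot (hR : IsRootSystem R) (hΔ : IsBase R Δ) {α : V}
    (hα : α ∈ Δ) : ∑ β ∈ positiveRoots R Δ, ⟪β, coroot α⟫ = 2 := by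
  have hαpos := isPositiveRoot_of_mem_base hΔ hα
  have hα0 : α ≠ 0 := fun h => hR.zero_not_mem (h ▸ hΔ.subset hα)
  have hcancel : ∑ β ∈ (positiveRoots R Δ).erase α, ⟪β, coroot α⟫ = 0 := by
    refine sum_involution (fun β _ => rootReflection α β) ?_ ?_ ?_ ?_
    · intro β _
      rw [inner_rootReflection_coroot hα0, add_neg_cancel]
    · intro β _ hβ hfix
      have := inner_rootReflection_coroot hα0 β
      rw [hfix] at this
      exact hβ (by linarith)
    · intro β hβ
      obtain ⟨hβα, hβpos⟩ := mem_erase.mp hβ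
      rw [mem_positiveRoots] at hβpos
      refine mem_erase.mpr ⟨fun hsα => hαpos.not_neg hR hΔ ?_,
        mem_positiveRoots.mpr (hβpos.rootReflection_of_ne hR hΔ hα hβα)⟩
      have hβ_neg : β = -α := by
        rw [← rootReflection_rootReflection hα0 β, hsα, rootReflection_self hα0]
      exact hβ_neg ▸ hβpos
    · intro β _
      exact rootReflection_rootReflection hα0 β
  rw [← add_sum_erase _ _ (mem_positiveRoots.mpr hαpos), hcancel, inner_coroot_self hα0, add_zero]

end RootSystem

section Coweight

variable {V : Type*} [NormedAddCommGroup V] [InnerProductSpace ℝ V]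
  {R Δ : Finset V} {α ϖv : V} (hα : α ∈ Δ) (hϖv : ∀ β ∈ Δ, ⟪β, ϖv⟫ = if β = α then 1 else 0)
include hα hϖv

lemma inner_sum_smul_coweight (c : V → ℝ) : ⟪∑ δ ∈ Δ, c δ • δ, ϖv⟫ = c α := by
  rw [sum_inner, sum_eq_single_of_mem α hα fun δ hδ hne => by
    rw [real_inner_smul_left, hϖv δ hδ, if_neg hne, mul_zero]]
  rw [real_inner_smul_left, hϖv α hα, if_pos rfl, mul_one]

lemma IsPositiveRoot.inner_coweight_nonneg {β : V} (hβ : IsPositiveRoot R Δ β) :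
    0 ≤ ⟪β, ϖv⟫ := by
  obtain ⟨-, c, rfl⟩ := hβ
  rw [inner_sum_smul_coweight hα hϖv]
  positivity

lemma isPositiveRoot_of_inner_coweight_pos (hΔ : IsBase R Δ) {β : V} (hβ : β ∈ R)
    (hpos : 0 < ⟪β, ϖv⟫) : IsPositiveRoot R Δ β := by
  refine ⟨hβ, (hΔ.expand β hβ).resolve_right ?_⟩
  rintro ⟨c, rfl⟩
  rw [inner_neg_left, inner_sum_smul_coweight hα hϖv] at hpos
  linarith [(c α).cast_nonneg (α := ℝ)]

lemma IsPositiveRoot.inner_coroot_nonpos_of_inner_coweight_eq_zero (hR : IsRootSystem R)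
    (hΔ : IsBase R Δ) {β : V} (hβ : IsPositiveRoot R Δ β) (h0 : ⟪β, ϖv⟫ = 0) :
    ⟪β, coroot α⟫ ≤ 0 := by
  have hαϖv : ⟪α, ϖv⟫ = 1 := by rw [hϖv α hα, if_pos rfl]
  have hβα : β ≠ α := by
    rintro rfl
    rw [hαϖv] at h0
    exact one_ne_zero h0
  have hs := (hβ.rootReflection_of_ne hR hΔ hα hβα).inner_coweight_nonneg hα hϖv
  rw [rootReflection, inner_sub_left, real_inner_smul_left, hαϖv, h0] at hs
  linarith

end Coweight

theorem statement_7_general {V : Type*} [NormedAddCommGroup V] [InnerProductSpace ℝ V]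
    (R Δ : Finset V) (hR : IsRootSystem R) (hΔ : IsBase R Δ)
    -- `Rp = R⁺` is the set of positive roots
    (Rp : Finset V)
    (hRp : ∀ β, β ∈ Rp ↔ β ∈ R ∧ ∃ c : V → ℕ, β = ∑ δ ∈ Δ, (c δ : ℝ) • δ)
    (α : V) (hα : α ∈ Δ)
    -- the fundamental coweight `ϖv = ϖ_α∨`
    (ϖv : V) (hϖv : ∀ β ∈ Δ, ⟪β, ϖv⟫ = if β = α then 1 else 0) :
    2 - ∑ β ∈ Rp.filter (fun β => ⟪β, ϖv⟫ = 0 ∧ ⟪β, coroot α⟫ < 0), ⟪β, coroot α⟫ =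
      ∑ β ∈ R.filter (fun β => 0 < ⟪β, ϖv⟫), ⟪β, coroot α⟫ := by
  obtain rfl : Rp = positiveRoots R Δ := ext fun β => (hRp β).trans mem_positiveRoots.symm
  have hpos : R.filter (fun β => 0 < ⟪β, ϖv⟫) = (positiveRoots R Δ).filter (0 < ⟪·, ϖv⟫) := by
    rw [positiveRoots, filter_filter]
    exact filter_congr fun β hβ =>
      ⟨fun h => ⟨isPositiveRoot_of_inner_coweight_pos hα hϖv hΔ hβ h, h⟩, And.right⟩
  have hzero : (positiveRoots R Δ).filter (¬ 0 < ⟪·, ϖv⟫) =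
      (positiveRoots R Δ).filter (⟪·, ϖv⟫ = 0) :=
    filter_congr fun β hβ => by
      have := (mem_positiveRoots.mp hβ).inner_coweight_nonneg hα hϖv
      constructor <;> intro h <;> linarith
  have hneg : ∑ β ∈ (positiveRoots R Δ).filter (fun β => ⟪β, ϖv⟫ = 0 ∧ ⟪β, coroot α⟫ < 0),
      ⟪β, coroot α⟫ = ∑ β ∈ (positiveRoots R Δ).filter (⟪·, ϖv⟫ = 0), ⟪β, coroot α⟫ := by
    rw [← filter_filter]
    refine sum_filter_of_ne fun β hβ hne => ?_
    obtain ⟨hβpos, h0⟩ := mem_filter.mp hβ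
    exact ((mem_positiveRoots.mp hβpos).inner_coroot_nonpos_of_inner_coweight_eq_zero
      hα hϖv hR hΔ h0).lt_of_ne hne
  have hsplit := sum_filter_add_sum_filter_not (positiveRoots R Δ) (0 < ⟪·, ϖv⟫)
    (⟪·, coroot α⟫)
  rw [hzero, sum_positiveRoots_inner_coroot hR hΔ hα] at hsplit
  rw [hpos, hneg]
  linarith

/-- `2 − Σ_{β∈S⁺(α,0), ⟨β,α∨⟩<0} ⟨β,α∨⟩ = Σ_{β∈R, ⟨β,ϖ_α∨⟩>0} ⟨β,α∨⟩`. -/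
theorem statement_7 {V : Type*} [NormedAddCommGroup V] [InnerProductSpace ℝ V]
    [FiniteDimensional ℝ V]
    (R Δ : Finset V) (hR : IsRootSystem R) (hΔ : IsBase R Δ)
    -- `Rp = R⁺` is the set of positive roots
    (Rp : Finset V)
    (hRp : ∀ β, β ∈ Rp ↔ β ∈ R ∧ ∃ c : V → ℕ, β = ∑ δ ∈ Δ, (c δ : ℝ) • δ)
    (α : V) (hα : α ∈ Δ)
    -- the fundamental coweight `ϖv = ϖ_α∨`
    (ϖv : V) (hϖv : ∀ β ∈ Δ, ⟪β, ϖv⟫ = if β = α then 1 else 0) :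
    2 - ∑ β ∈ Rp.filter (fun β => ⟪β, ϖv⟫ = 0 ∧ ⟪β, coroot α⟫ < 0), ⟪β, coroot α⟫ =
      ∑ β ∈ R.filter (fun β => 0 < ⟪β, ϖv⟫), ⟪β, coroot α⟫ :=
  statement_7_general R Δ hR hΔ Rp hRp α hα ϖv hϖv
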